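/- arXiv:2203.02494 — 4 statements merged into one kernel-verified Lean document; each statement's English description precedes it below -/
import Mathlib

section
/- If Y is a retract of X, then TC_{n,X}(Y^n) ≥ TC_n(Y). -/
def CoverHomotopic {A B : Type*} [TopologicalSpace A] [TopologicalSpace B]
    {ι : Type*} (f : ι → C(A, B)) (r : ℕ) : Prop :=
  ∃ U : Fin r → Set A, (∀ i, IsOpen (U i)) ∧ (⋃ i, U i) = Set.univ ∧
    ∀ i, ∀ j k : ι, ((f j).restrict (U i)).Homotopic ((f k).restrict (U i))

noncomputable def hD {A B : Type*} [TopologicalSpace A] [TopologicalSpace B]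
    {ι : Type*} (f : ι → C(A, B)) : ℕ∞ :=
  sInf {n : ℕ∞ | ∃ m : ℕ, 0 < m ∧ n = m ∧ CoverHomotopic f m}

/-- The projection `X^n → X` onto the `i`-th factor. -/
def proj (X : Type*) [TopologicalSpace X] (n : ℕ) (i : Fin n) : C(Fin n → X, X) :=
  ⟨fun x => x i, continuous_apply i⟩

/-- The projection `X^n → X` onto the `i`-th factor restricted to a subspace `Y ⊆ X^n`. -/
def restProj {X : Type*} [TopologicalSpace X] {n : ℕ} (Y : Set (Fin n → X)) (i : Fin n) :
    C(Y, X) :=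
  ⟨fun y => (y : Fin n → X) i, (continuous_apply i).comp continuous_subtype_val⟩

/-- The relative higher topological complexity `TC_{n,X}(Y)` for `Y ⊆ X^n`. -/
noncomputable def TCrel {X : Type*} [TopologicalSpace X] (n : ℕ) (Y : Set (Fin n → X)) : ℕ∞ :=
  hD (restProj Y)

/-- The higher topological complexity `TC_n(X)`. -/
noncomputable def TCn (X : Type*) [TopologicalSpace X] (n : ℕ) : ℕ∞ :=
  hD (proj X n)

/-!
Pulling an open cover of `X^n` back along the inclusion `Y^n → X^n` and pushing the homotopies
between the projections forward along `r` turns a cover witnessing `TC_{n,X}(Y^n) ≤ m` into one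
witnessing `TC_n(Y) ≤ m`, because `r ∘ p_j ∘ i_{Y^n} = q_j`.
-/

section Naturality

variable {A B A' B' ι : Type*} [TopologicalSpace A] [TopologicalSpace B]
  [TopologicalSpace A'] [TopologicalSpace B'] {f : ι → C(A, B)} {g : ι → C(A', B')}

theorem CoverHomotopic.of_comp_eq (φ : C(A', A)) (ρ : C(B, B'))
    (hfg : ∀ j, ρ.comp ((f j).comp φ) = g j) {m : ℕ} (hf : CoverHomotopic f m) :
    CoverHomotopic g m := by
  obtain ⟨U, hU_open, hU_cover, hU_homotopic⟩ := hf
  refine ⟨fun i => φ ⁻¹' U i, fun i => (hU_open i).preimage φ.continuous, ?_, fun i j k => ?_⟩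
  · rw [← Set.preimage_iUnion, hU_cover, Set.preimage_univ]
  · have restrict_eq : ∀ j, (g j).restrict (φ ⁻¹' U i) =
        ρ.comp (((f j).restrict (U i)).comp (φ.restrictPreimage (U i))) := by
      intro j
      rw [← hfg j]
      rfl
    rw [restrict_eq j, restrict_eq k]
    exact .comp (.refl ρ) (.comp (hU_homotopic i j k) (.refl _))

theorem hD_le_of_comp_eq (φ : C(A', A)) (ρ : C(B, B'))
    (hfg : ∀ j, ρ.comp ((f j).comp φ) = g j) : hD g ≤ hD f := by
  apply sInf_le_sInf
  rintro _ ⟨m, hm, rfl, hf⟩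
  exact ⟨m, hm, rfl, hf.of_comp_eq φ ρ hfg⟩

end Naturality

def piSubtypeInclusion {X : Type*} [TopologicalSpace X] (n : ℕ) (Y : Set X) :
    C(Fin n → Y, {x : Fin n → X | ∀ i, x i ∈ Y}) :=
  ⟨fun y => ⟨fun i => y i, fun i => (y i).2⟩,
    (continuous_pi fun i => continuous_subtype_val.comp (continuous_apply i)).subtype_mk _⟩

theorem stmt3_general {X : Type*} [TopologicalSpace X] (n : ℕ)
    (Y : Set X) (r : C(X, Y)) (hr : ∀ y : Y, r (y : X) = y) :
    TCrel n {x : Fin n → X | ∀ i, x i ∈ Y} ≥ TCn Y n :=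
  hD_le_of_comp_eq (piSubtypeInclusion n Y) r fun j => ContinuousMap.ext fun y => hr (y j)

theorem stmt3 {X : Type*} [TopologicalSpace X] [PathConnectedSpace X] (n : ℕ)
    (Y : Set X) (r : C(X, Y)) (hr : ∀ y : Y, r (y : X) = y) :
    TCrel n {x : Fin n → X | ∀ i, x i ∈ Y} ≥ TCn Y n :=
  stmt3_general n Y r hr
end

section
/- If Y is a retract of X, then TC_n(Y) ≤ TC_n(X). -/
theorem CoverHomotopic.of_factor {A B A' B' ι : Type*} [TopologicalSpace A] [TopologicalSpace B]
    [TopologicalSpace A'] [TopologicalSpace B'] {f : ι → C(A, B)} {g : ι → C(A', B')}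
    (φ : C(A', A)) (ρ : C(B, B')) (hg : ∀ j, g j = ρ.comp ((f j).comp φ)) {m : ℕ}
    (hf : CoverHomotopic f m) : CoverHomotopic g m := by
  obtain ⟨U, hU_open, hU_cover, hU_homotopic⟩ := hf
  refine ⟨fun i => φ ⁻¹' U i, fun i => (hU_open i).preimage φ.continuous, ?_, fun i j k => ?_⟩
  · rw [← Set.preimage_iUnion, hU_cover, Set.preimage_univ]
  · have restrict_eq : ∀ l, (g l).restrict (φ ⁻¹' U i) =
        (ρ.comp ((f l).restrict (U i))).comp (φ.restrictPreimage (U i)) := fun l => by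
      ext x
      simp [hg l]
    rw [restrict_eq j, restrict_eq k]
    exact ((ContinuousMap.Homotopic.refl ρ).comp (hU_homotopic i j k)).comp
      (ContinuousMap.Homotopic.refl _)

theorem hD_le_hD_of_factor {A B A' B' ι : Type*} [TopologicalSpace A] [TopologicalSpace B]
    [TopologicalSpace A'] [TopologicalSpace B'] {f : ι → C(A, B)} {g : ι → C(A', B')}
    (φ : C(A', A)) (ρ : C(B, B')) (hg : ∀ j, g j = ρ.comp ((f j).comp φ)) : hD g ≤ hD f :=
  sInf_le_sInf fun _ ⟨m, hm, hn, hf⟩ => ⟨m, hm, hn, hf.of_factor φ ρ hg⟩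

theorem proj_eq_retraction_comp {X : Type*} [TopologicalSpace X] (n : ℕ) {Y : Set X}
    (r : C(X, Y)) (hr : ∀ y : Y, r (y : X) = y) (i : Fin n) :
    proj Y n i = r.comp ((proj X n i).comp
      (ContinuousMap.piMap fun _ => ⟨Subtype.val, continuous_subtype_val⟩)) := by
  ext x
  simp [proj, hr]

theorem stmt4_general {X : Type*} [TopologicalSpace X] (n : ℕ)
    (Y : Set X) (r : C(X, Y)) (hr : ∀ y : Y, r (y : X) = y) :
    TCn Y n ≤ TCn X n :=
  hD_le_hD_of_factor _ r (proj_eq_retraction_comp n r hr)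

theorem stmt4 {X : Type*} [TopologicalSpace X] [PathConnectedSpace X] (n : ℕ)
    (Y : Set X) (r : C(X, Y)) (hr : ∀ y : Y, r (y : X) = y) :
    TCn Y n ≤ TCn X n :=
  stmt4_general n Y r hr
end

section
/- For any subspace Y ⊆ X × X, the relative topological complexity satisfies TC_{2,X}(Y) ≤ cat_{X×X}(Y), the relative Lusternik–Schnirelmann category of Y in X × X. -/
/-- The inclusion of a subspace `Y ⊆ X × X`. -/
def incl {X : Type*} [TopologicalSpace X] (Y : Set (X × X)) : C(Y, X × X) :=
  ⟨fun y => (y : X × X), continuous_subtype_val⟩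

/-- `TC_{2,X}(Y) = D(p₁ ∘ i_Y, p₂ ∘ i_Y)`. -/
noncomputable def TC2rel {X : Type*} [TopologicalSpace X] (Y : Set (X × X)) : ℕ∞ :=
  hD ![(ContinuousMap.fst : C(X × X, X)).comp (incl Y), (ContinuousMap.snd : C(X × X, X)).comp (incl Y)]

/-- The relative LS-category `cat_{X×X}(Y) = D(i_Y, *)`. -/
noncomputable def catRel {X : Type*} [TopologicalSpace X] (Y : Set (X × X)) (c : X × X) : ℕ∞ :=
  hD ![incl Y, ContinuousMap.const Y c]

open ContinuousMap

section HomotopicDistance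

variable {A B C : Type*} [TopologicalSpace A] [TopologicalSpace B] [TopologicalSpace C]

theorem coverHomotopic_pair_iff {f g : C(A, B)} {r : ℕ} :
    CoverHomotopic ![f, g] r ↔ ∃ U : Fin r → Set A, (∀ i, IsOpen (U i)) ∧
      (⋃ i, U i) = Set.univ ∧ ∀ i, (f.restrict (U i)).Homotopic (g.restrict (U i)) := by
  constructor
  · rintro ⟨U, hopen, hcover, hhom⟩
    exact ⟨U, hopen, hcover, fun i => hhom i 0 1⟩
  · rintro ⟨U, hopen, hcover, hhom⟩
    refine ⟨U, hopen, hcover, fun i j k => ?_⟩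
    fin_cases j <;> fin_cases k
    exacts [.refl _, hhom i, (hhom i).symm, .refl _]

theorem hD_le_hD {ι κ : Type*} {f : ι → C(A, B)} {g : κ → C(A, C)}
    (h : ∀ r, CoverHomotopic f r → CoverHomotopic g r) : hD g ≤ hD f := by
  apply sInf_le_sInf
  rintro n ⟨m, hm, rfl, hf⟩
  exact ⟨m, hm, rfl, h m hf⟩

theorem hD_comp_le_of_homotopic {g g' : C(A, B)} {f₁ f₂ : C(B, C)}
    (hf : (f₁.comp g').Homotopic (f₂.comp g')) :
    hD ![f₁.comp g, f₂.comp g] ≤ hD ![g, g'] := by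
  refine hD_le_hD fun r hg => ?_
  obtain ⟨U, hopen, hcover, hhom⟩ := coverHomotopic_pair_iff.mp hg
  refine coverHomotopic_pair_iff.mpr ⟨U, hopen, hcover, fun i => ?_⟩
  have hf_restrict : (f₁.comp (g'.restrict (U i))).Homotopic (f₂.comp (g'.restrict (U i))) :=
    hf.comp (.refl (restrict (U i) (.id A)))
  exact ((Homotopic.refl f₁).comp (hhom i)).trans
    (hf_restrict.trans ((Homotopic.refl f₂).comp (hhom i).symm))

end HomotopicDistance

theorem homotopic_const_of_pathConnectedSpace {A X : Type*} [TopologicalSpace A]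
    [TopologicalSpace X] [PathConnectedSpace X] (a b : X) :
    (ContinuousMap.const A a).Homotopic (ContinuousMap.const A b) :=
  ⟨(PathConnectedSpace.somePath a b).toHomotopyConst⟩

theorem stmt6 {X : Type*} [TopologicalSpace X] [PathConnectedSpace X]
    (Y : Set (X × X)) (c : X × X) :
    TC2rel Y ≤ catRel Y c :=
  hD_comp_le_of_homotopic (homotopic_const_of_pathConnectedSpace c.1 c.2)
end

section
/- If q_1 : E_1 → B and q_2 : E_2 → B are fiber homotopy equivalent fibrations (there exist fiberwise maps h : E_1 → E_2 and k : E_2 → E_1 with h∘k ≃ id and k∘h ≃ id over B), then TC_n[q_1 : E_1 → B] = TC_n[q_2 : E_2 → B]. -/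
/-- Hurewicz fibration: the homotopy lifting property with respect to all spaces. -/
def IsHurewiczFibration {E B : Type*} [TopologicalSpace E] [TopologicalSpace B]
    (q : C(E, B)) : Prop :=
  ∀ (Z : Type) (_ : TopologicalSpace Z) (f : C(Z, E)) (H : C(Z × unitInterval, B)),
    (∀ z, H (z, 0) = q (f z)) →
      ∃ G : C(Z × unitInterval, E), (∀ z, G (z, 0) = f z) ∧ ∀ p, q (G p) = H p

/-- The `n`-fold fiber product `E ×_B ⋯ ×_B E` as a subspace of `Eⁿ`. -/
def fiberProd {E B : Type*} [TopologicalSpace E] [TopologicalSpace B] (q : C(E, B))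
    (n : ℕ) : Set (Fin n → E) :=
  {x | ∀ i j, q (x i) = q (x j)}

/-- The parametrised higher topological complexity
`TCₙ[q : E → B] = D(p₁^B, …, pₙ^B)`. -/
noncomputable def pTC {E B : Type*} [TopologicalSpace E] [TopologicalSpace B]
    (q : C(E, B)) (n : ℕ) : ℕ∞ :=
  hD (restProj (fiberProd q n))

/-!
A fiberwise map `h : E₁ → E₂` induces a map of `n`-fold fiber products under which the
projections of `E₂` pull back to `h` composed with the projections of `E₁`. Pulling back a cover
witnessing `TCₙ[q₂] ≤ m` therefore gives a cover on which the maps `h ∘ pᵢ` are pairwise homotopic,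
and composing with a homotopy left inverse `k` of `h` removes the `h`. Hence `TCₙ[q₁] ≤ TCₙ[q₂]`,
and the other inequality is symmetric.
-/

open ContinuousMap

theorem ContinuousMap.Homotopic.of_comp_left {X Y Z : Type*} [TopologicalSpace X]
    [TopologicalSpace Y] [TopologicalSpace Z] {g : C(Y, Z)} {k : C(Z, Y)}
    (hkg : (k.comp g).Homotopic (ContinuousMap.id Y)) {a b : C(X, Y)}
    (hab : (g.comp a).Homotopic (g.comp b)) : a.Homotopic b := by
  have hka : ((k.comp g).comp a).Homotopic a := by simpa only [id_comp] using hkg.comp (.refl a)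
  have hkb : ((k.comp g).comp b).Homotopic b := by simpa only [id_comp] using hkg.comp (.refl b)
  have hk : ((k.comp g).comp a).Homotopic ((k.comp g).comp b) := by
    simpa only [comp_assoc] using (Homotopic.refl k).comp hab
  exact hka.symm.trans (hk.trans hkb)

section CoverHomotopic

variable {A A' B B' ι : Type*} [TopologicalSpace A] [TopologicalSpace A'] [TopologicalSpace B]
  [TopologicalSpace B'] {f : ι → C(A, B)} {m : ℕ}

theorem CoverHomotopic.comp_right (hf : CoverHomotopic f m) (φ : C(A', A)) :
    CoverHomotopic (fun i => (f i).comp φ) m := by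
  obtain ⟨U, hU_open, hU_cover, hU⟩ := hf
  refine ⟨fun r => φ ⁻¹' U r, fun r => (hU_open r).preimage φ.continuous, ?_, fun r j l => ?_⟩
  · rw [← Set.preimage_iUnion, hU_cover, Set.preimage_univ]
  · exact (hU r j l).comp (.refl (φ.restrictPreimage (U r)))

theorem CoverHomotopic.of_comp_left {g : C(B, B')} {k : C(B', B)}
    (hkg : (k.comp g).Homotopic (ContinuousMap.id B))
    (hf : CoverHomotopic (fun i => g.comp (f i)) m) : CoverHomotopic f m := by
  obtain ⟨U, hU_open, hU_cover, hU⟩ := hf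
  exact ⟨U, hU_open, hU_cover, fun r j l => Homotopic.of_comp_left hkg (hU r j l)⟩

theorem hD_le_hD_of_coverHomotopic {C D κ : Type*} [TopologicalSpace C] [TopologicalSpace D]
    {g : κ → C(C, D)} (hfg : ∀ m, CoverHomotopic f m → CoverHomotopic g m) : hD g ≤ hD f :=
  sInf_le_sInf fun _ ⟨m, hm, hN, hc⟩ => ⟨m, hm, hN, hfg m hc⟩

end CoverHomotopic

section FiberProd

variable {E₁ E₂ B : Type*} [TopologicalSpace E₁] [TopologicalSpace E₂] [TopologicalSpace B]
  {q₁ : C(E₁, B)} {q₂ : C(E₂, B)} {h : C(E₁, E₂)}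

def fiberProdMap (hfib : ∀ e, q₂ (h e) = q₁ e) (n : ℕ) : C(fiberProd q₁ n, fiberProd q₂ n) where
  toFun x := ⟨fun i => h (x.1 i), fun i j => by simpa only [hfib] using x.2 i j⟩
  continuous_toFun := (continuous_pi fun i =>
    h.continuous.comp ((continuous_apply i).comp continuous_subtype_val)).subtype_mk _

theorem restProj_comp_fiberProdMap (hfib : ∀ e, q₂ (h e) = q₁ e) (n : ℕ) (i : Fin n) :
    (restProj (fiberProd q₂ n) i).comp (fiberProdMap hfib n) =
      h.comp (restProj (fiberProd q₁ n) i) :=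
  rfl

theorem pTC_le_of_fiberwise_of_comp_homotopic_id (hfib : ∀ e, q₂ (h e) = q₁ e) {k : C(E₂, E₁)}
    (hkh : (k.comp h).Homotopic (ContinuousMap.id E₁)) (n : ℕ) : pTC q₁ n ≤ pTC q₂ n := by
  refine hD_le_hD_of_coverHomotopic fun m hc => ?_
  have hpull := hc.comp_right (fiberProdMap hfib n)
  simp only [restProj_comp_fiberProdMap] at hpull
  exact hpull.of_comp_left hkh

end FiberProd

theorem stmt18_general {E₁ E₂ B : Type*} [TopologicalSpace E₁] [TopologicalSpace E₂]
    [TopologicalSpace B] (q₁ : C(E₁, B)) (q₂ : C(E₂, B))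
    (h : C(E₁, E₂)) (k : C(E₂, E₁))
    (hfib₁ : ∀ e, q₂ (h e) = q₁ e) (hfib₂ : ∀ e, q₁ (k e) = q₂ e)
    (hhk : ∃ H : (h.comp k).Homotopy (ContinuousMap.id E₂), ∀ t x, q₂ (H (t, x)) = q₂ x)
    (hkh : ∃ K : (k.comp h).Homotopy (ContinuousMap.id E₁), ∀ t x, q₁ (K (t, x)) = q₁ x)
    (n : ℕ) :
    pTC q₁ n = pTC q₂ n := by
  obtain ⟨H, -⟩ := hhk
  obtain ⟨K, -⟩ := hkh
  exact le_antisymm (pTC_le_of_fiberwise_of_comp_homotopic_id hfib₁ ⟨K⟩ n)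
    (pTC_le_of_fiberwise_of_comp_homotopic_id hfib₂ ⟨H⟩ n)

theorem stmt18 {E₁ E₂ B : Type*} [TopologicalSpace E₁] [TopologicalSpace E₂]
    [TopologicalSpace B] (q₁ : C(E₁, B)) (q₂ : C(E₂, B))
    (hq₁ : IsHurewiczFibration q₁) (hq₂ : IsHurewiczFibration q₂)
    (h : C(E₁, E₂)) (k : C(E₂, E₁))
    (hfib₁ : ∀ e, q₂ (h e) = q₁ e) (hfib₂ : ∀ e, q₁ (k e) = q₂ e)
    (hhk : ∃ H : (h.comp k).Homotopy (ContinuousMap.id E₂), ∀ t x, q₂ (H (t, x)) = q₂ x)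
    (hkh : ∃ K : (k.comp h).Homotopy (ContinuousMap.id E₁), ∀ t x, q₁ (K (t, x)) = q₁ x)
    (n : ℕ) :
    pTC q₁ n = pTC q₂ n :=
  stmt18_general q₁ q₂ h k hfib₁ hfib₂ hhk hkh n
end
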